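/- arXiv:2409.08340 — 3 statements merged into one kernel-verified Lean document; each statement's English description precedes it below -/
import Mathlib

section
/- Under the hypotheses of the regular Legendre transform H = y^a_μ p^μ_a − L, a pair of smooth maps (y^a(x), s^μ(x)) solves the Herglotz–Euler–Lagrange equations ∂/∂x^μ(∂L/∂y^a_μ) = ∂L/∂y^a + (∂L/∂s^μ)(∂L/∂y^a_μ) and ∂s^μ/∂x^μ = L if and only if, setting p^μ_a(x) = (∂L/∂y^a_μ)(x, y(x), ∂y(x), s(x)), the triple (y, p, s) solves the Herglotz–Hamilton–de Donder–Weyl equations: ∂y^a/∂x^μ = ∂H/∂p^μ_a, ∂p^μ_a/∂x^μ = −∂H/∂y^a − p^μ_a ∂H/∂s^μ, and ∂s^μ/∂x^μ = p^μ_a ∂H/∂p^μ_a − H. -/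
namespace Stmt4Aux

lemma pi_sum_single {m n : ℕ} (u : Fin n → Fin m → ℝ) :
    ∑ a, ∑ μ, u a μ • (Pi.single a (Pi.single μ 1) : Fin n → Fin m → ℝ) = u := by
  funext b ν
  simp only [Finset.sum_apply, Pi.smul_apply, Pi.single_apply, smul_eq_mul, ite_apply,
    Pi.zero_apply, mul_ite, mul_one, mul_zero]
  simp [Finset.sum_ite_eq, eq_comm]

lemma clm_eval {m n : ℕ} (D : (Fin n → Fin m → ℝ) →L[ℝ] ℝ) (u : Fin n → Fin m → ℝ) :
    D u = ∑ a, ∑ μ, u a μ * D (Pi.single a (Pi.single μ 1)) := by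
  conv_lhs => rw [← pi_sum_single u]
  simp [map_sum, map_smul]

lemma sum_mul_single {m n : ℕ} (c : Fin n → Fin m → ℝ) (b : Fin n) (ν : Fin m) :
    ∑ a, ∑ μ, c a μ * (Pi.single b (Pi.single ν 1) : Fin n → Fin m → ℝ) a μ = c b ν := by
  simp only [Pi.single_apply, ite_apply, Pi.zero_apply, mul_ite, mul_one, mul_zero]
  simp [Finset.sum_ite_eq, eq_comm]

variable {m n : ℕ}

local notation "XT" => (Fin m → ℝ)
local notation "YT" => (Fin n → ℝ)
local notation "VT" => (Fin n → Fin m → ℝ)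
local notation "ST" => (Fin m → ℝ)
local notation "QT" => ((Fin m → ℝ) × (Fin n → ℝ) × (Fin n → Fin m → ℝ) × (Fin m → ℝ))

lemma slice_y {F : (Fin m → ℝ) × (Fin n → ℝ) × (Fin n → Fin m → ℝ) × (Fin m → ℝ) → ℝ}
    {x : Fin m → ℝ} {y : Fin n → ℝ} {v : Fin n → Fin m → ℝ} {s : Fin m → ℝ}
    (hF : DifferentiableAt ℝ F (x, y, v, s)) (w : Fin n → ℝ) :
    fderiv ℝ (fun y' => F (x, y', v, s)) y w = fderiv ℝ F (x, y, v, s) (0, w, 0, 0) := by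
  have hin : HasFDerivAt (fun y' : Fin n → ℝ => ((x, y', v, s) : QT))
      ((0 : YT →L[ℝ] XT).prod ((ContinuousLinearMap.id ℝ YT).prod
        ((0 : YT →L[ℝ] VT).prod (0 : YT →L[ℝ] ST)))) y :=
    HasFDerivAt.prodMk (hasFDerivAt_const x y) (HasFDerivAt.prodMk (hasFDerivAt_id y)
      (HasFDerivAt.prodMk (hasFDerivAt_const v y) (hasFDerivAt_const s y)))
  have h : HasFDerivAt (fun y' => F (x, y', v, s)) _ y := hF.hasFDerivAt.comp y hin
  rw [h.fderiv]
  simp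

lemma slice_v {F : (Fin m → ℝ) × (Fin n → ℝ) × (Fin n → Fin m → ℝ) × (Fin m → ℝ) → ℝ}
    {x : Fin m → ℝ} {y : Fin n → ℝ} {v : Fin n → Fin m → ℝ} {s : Fin m → ℝ}
    (hF : DifferentiableAt ℝ F (x, y, v, s)) (w : Fin n → Fin m → ℝ) :
    fderiv ℝ (fun v' => F (x, y, v', s)) v w = fderiv ℝ F (x, y, v, s) (0, 0, w, 0) := by
  have hin : HasFDerivAt (fun v' : Fin n → Fin m → ℝ => ((x, y, v', s) : QT))
      ((0 : VT →L[ℝ] XT).prod ((0 : VT →L[ℝ] YT).prod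
        ((ContinuousLinearMap.id ℝ VT).prod (0 : VT →L[ℝ] ST)))) v :=
    HasFDerivAt.prodMk (hasFDerivAt_const x v) (HasFDerivAt.prodMk (hasFDerivAt_const y v)
      (HasFDerivAt.prodMk (hasFDerivAt_id v) (hasFDerivAt_const s v)))
  have h : HasFDerivAt (fun v' => F (x, y, v', s)) _ v := hF.hasFDerivAt.comp v hin
  rw [h.fderiv]
  simp

lemma slice_s {F : (Fin m → ℝ) × (Fin n → ℝ) × (Fin n → Fin m → ℝ) × (Fin m → ℝ) → ℝ}
    {x : Fin m → ℝ} {y : Fin n → ℝ} {v : Fin n → Fin m → ℝ} {s : Fin m → ℝ}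
    (hF : DifferentiableAt ℝ F (x, y, v, s)) (w : Fin m → ℝ) :
    fderiv ℝ (fun s' => F (x, y, v, s')) s w = fderiv ℝ F (x, y, v, s) (0, 0, 0, w) := by
  have hin : HasFDerivAt (fun s' : Fin m → ℝ => ((x, y, v, s') : QT))
      ((0 : ST →L[ℝ] XT).prod ((0 : ST →L[ℝ] YT).prod
        ((0 : ST →L[ℝ] VT).prod (ContinuousLinearMap.id ℝ ST)))) s :=
    HasFDerivAt.prodMk (hasFDerivAt_const x s) (HasFDerivAt.prodMk (hasFDerivAt_const y s)
      (HasFDerivAt.prodMk (hasFDerivAt_const v s) (hasFDerivAt_id s)))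
  have h : HasFDerivAt (fun s' => F (x, y, v, s')) _ s := hF.hasFDerivAt.comp s hin
  rw [h.fderiv]
  simp

lemma master
    (L : XT → YT → VT → ST → ℝ)
    (hL : ContDiff ℝ (⊤ : ℕ∞) fun q : QT => L q.1 q.2.1 q.2.2.1 q.2.2.2)
    (Y : XT → YT → VT → ST → VT)
    (hY : ContDiff ℝ (⊤ : ℕ∞) fun q : QT => Y q.1 q.2.1 q.2.2.1 q.2.2.2)
    (hYright : ∀ x y p s a μ,
      fderiv ℝ (fun v' => L x y v' s) (Y x y p s) (Pi.single a (Pi.single μ 1)) = p a μ)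
    (H : XT → YT → VT → ST → ℝ)
    (hH : ∀ x y p s, H x y p s =
      (∑ a, ∑ μ, Y x y p s a μ * p a μ) - L x y (Y x y p s) s)
    (x : XT) (y : YT) (p : VT) (s : ST) (d : QT) :
    fderiv ℝ (fun q : QT => H q.1 q.2.1 q.2.2.1 q.2.2.2) (x, y, p, s) d
      = (∑ a, ∑ μ, Y x y p s a μ * d.2.2.1 a μ)
        - fderiv ℝ (fun q : QT => L q.1 q.2.1 q.2.2.1 q.2.2.2) (x, y, Y x y p s, s)
            (d.1, d.2.1, 0, d.2.2.2) := by
  set q1 : QT := (x, y, p, s) with hq1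
  set Yf : QT → VT := fun q => Y q.1 q.2.1 q.2.2.1 q.2.2.2 with hYf
  set Lf : QT → ℝ := fun q => L q.1 q.2.1 q.2.2.1 q.2.2.2 with hLf
  set DY : QT →L[ℝ] VT := fderiv ℝ Yf q1 with hDY
  set DQ : QT →L[ℝ] ℝ := fderiv ℝ Lf (x, y, Y x y p s, s) with hDQ
  have hYq : HasFDerivAt Yf DY q1 := (hY.differentiable (by simp) q1).hasFDerivAt
  set Pam : (a : Fin n) → (μ : Fin m) → (VT →L[ℝ] ℝ) := fun a μ =>
    (ContinuousLinearMap.proj (R := ℝ) (φ := fun _ : Fin m => ℝ) μ).comp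
      (ContinuousLinearMap.proj (R := ℝ) (φ := fun _ : Fin n => Fin m → ℝ) a) with hPam
  set Pproj : QT →L[ℝ] VT :=
    (ContinuousLinearMap.fst ℝ VT ST).comp ((ContinuousLinearMap.snd ℝ YT (VT × ST)).comp
      (ContinuousLinearMap.snd ℝ XT (YT × VT × ST))) with hPproj
  have hsum : HasFDerivAt (fun q : QT => ∑ a, ∑ μ, Yf q a μ * q.2.2.1 a μ)
      (∑ a, ∑ μ, (Yf q1 a μ • ((Pam a μ).comp Pproj)
        + q1.2.2.1 a μ • ((Pam a μ).comp DY))) q1 := by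
    refine HasFDerivAt.fun_sum fun a _ => HasFDerivAt.fun_sum fun μ _ => ?_
    have hc : HasFDerivAt (fun q : QT => Yf q a μ) ((Pam a μ).comp DY) q1 :=
      ((Pam a μ).hasFDerivAt).comp q1 hYq
    have hd : HasFDerivAt (fun q : QT => q.2.2.1 a μ) ((Pam a μ).comp Pproj) q1 :=
      ((Pam a μ).comp Pproj).hasFDerivAt
    exact hc.mul hd
  set Px : QT →L[ℝ] XT := ContinuousLinearMap.fst ℝ XT (YT × VT × ST) with hPx
  set Py : QT →L[ℝ] YT :=
    (ContinuousLinearMap.fst ℝ YT (VT × ST)).comp (ContinuousLinearMap.snd ℝ XT (YT × VT × ST))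
    with hPy
  set Ps : QT →L[ℝ] ST :=
    (ContinuousLinearMap.snd ℝ VT ST).comp ((ContinuousLinearMap.snd ℝ YT (VT × ST)).comp
      (ContinuousLinearMap.snd ℝ XT (YT × VT × ST))) with hPs
  have hin : HasFDerivAt (fun q : QT => ((q.1, q.2.1, Yf q, q.2.2.2) : QT))
      (Px.prod (Py.prod (DY.prod Ps))) q1 :=
    HasFDerivAt.prodMk Px.hasFDerivAt (HasFDerivAt.prodMk Py.hasFDerivAt (hYq.prodMk Ps.hasFDerivAt))
  have hLq : HasFDerivAt Lf DQ (x, y, Y x y p s, s) :=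
    (hL.differentiable (by simp) _).hasFDerivAt
  have hLcomp : HasFDerivAt (fun q : QT => Lf (q.1, q.2.1, Yf q, q.2.2.2))
      (DQ.comp (Px.prod (Py.prod (DY.prod Ps)))) q1 := by have := hLq.comp q1 hin; exact this
  have htot := hsum.fun_sub hLcomp
  have hfun : (fun q : QT => H q.1 q.2.1 q.2.2.1 q.2.2.2)
      = fun q : QT => (∑ a, ∑ μ, Yf q a μ * q.2.2.1 a μ) - Lf (q.1, q.2.1, Yf q, q.2.2.2) :=
    funext fun q => hH q.1 q.2.1 q.2.2.1 q.2.2.2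
  rw [hfun, htot.fderiv]
  simp only [ContinuousLinearMap.coe_sub', Pi.sub_apply, ContinuousLinearMap.coe_sum',
    Finset.sum_apply, ContinuousLinearMap.add_apply, ContinuousLinearMap.coe_smul',
    Pi.smul_apply, ContinuousLinearMap.coe_comp', Function.comp_apply,
    ContinuousLinearMap.proj_apply, ContinuousLinearMap.coe_fst', ContinuousLinearMap.coe_snd',
    ContinuousLinearMap.prod_apply, smul_eq_mul]
  have hsplit : ((d.1, d.2.1, DY d, d.2.2.2) : QT)
      = ((d.1, d.2.1, 0, d.2.2.2) : QT) + ((0, 0, DY d, 0) : QT) := by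
    simp [Prod.ext_iff]
  have hDv : ∀ u : VT, DQ (0, 0, u, 0) = ∑ a, ∑ μ, u a μ * p a μ := by
    intro u
    have hEv : ∀ a μ, DQ ((0 : XT), (0 : YT), (Pi.single a (Pi.single μ 1) : VT), (0 : ST))
        = p a μ := by
      intro a μ
      rw [← slice_v (F := Lf) (hL.differentiable (by simp) _) (Pi.single a (Pi.single μ 1))]
      exact hYright x y p s a μ
    have := clm_eval (DQ.comp ((0 : VT →L[ℝ] XT).prod ((0 : VT →L[ℝ] YT).prod
      ((ContinuousLinearMap.id ℝ VT).prod (0 : VT →L[ℝ] ST))))) u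
    simpa [hEv] using this
  simp only [hPam, hPproj, hPx, hPy, hPs, ContinuousLinearMap.coe_comp', Function.comp_apply,
    ContinuousLinearMap.proj_apply, ContinuousLinearMap.coe_fst', ContinuousLinearMap.coe_snd']
  rw [hsplit, map_add, hDv]
  have hcomm : ∑ a, ∑ μ, q1.2.2.1 a μ * (DY d) a μ = ∑ a, ∑ μ, (DY d) a μ * p a μ := by
    simp [mul_comm, hq1]
  simp only [Finset.sum_add_distrib]
  rw [hcomm]
  have : Yf q1 = Y x y p s := rfl
  rw [this]
  ring

lemma hHdiff
    (L : XT → YT → VT → ST → ℝ)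
    (hL : ContDiff ℝ (⊤ : ℕ∞) fun q : QT => L q.1 q.2.1 q.2.2.1 q.2.2.2)
    (Y : XT → YT → VT → ST → VT)
    (hY : ContDiff ℝ (⊤ : ℕ∞) fun q : QT => Y q.1 q.2.1 q.2.2.1 q.2.2.2)
    (H : XT → YT → VT → ST → ℝ)
    (hH : ∀ x y p s, H x y p s =
      (∑ a, ∑ μ, Y x y p s a μ * p a μ) - L x y (Y x y p s) s) :
    Differentiable ℝ (fun q : QT => H q.1 q.2.1 q.2.2.1 q.2.2.2) := by
  have hfun : (fun q : QT => H q.1 q.2.1 q.2.2.1 q.2.2.2)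
      = fun q : QT => (∑ a, ∑ μ, Y q.1 q.2.1 q.2.2.1 q.2.2.2 a μ * q.2.2.1 a μ)
          - L q.1 q.2.1 (Y q.1 q.2.1 q.2.2.1 q.2.2.2) q.2.2.2 :=
    funext fun q => hH q.1 q.2.1 q.2.2.1 q.2.2.2
  rw [hfun]
  have h1 : Differentiable ℝ (fun q : QT => Y q.1 q.2.1 q.2.2.1 q.2.2.2) :=
    hY.differentiable (by simp)
  have h2 : Differentiable ℝ (fun q : QT => L q.1 q.2.1 q.2.2.1 q.2.2.2) :=
    hL.differentiable (by simp)
  fun_prop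

lemma cor_p
    (L : XT → YT → VT → ST → ℝ)
    (hL : ContDiff ℝ (⊤ : ℕ∞) fun q : QT => L q.1 q.2.1 q.2.2.1 q.2.2.2)
    (Y : XT → YT → VT → ST → VT)
    (hY : ContDiff ℝ (⊤ : ℕ∞) fun q : QT => Y q.1 q.2.1 q.2.2.1 q.2.2.2)
    (hYright : ∀ x y p s a μ,
      fderiv ℝ (fun v' => L x y v' s) (Y x y p s) (Pi.single a (Pi.single μ 1)) = p a μ)
    (H : XT → YT → VT → ST → ℝ)
    (hH : ∀ x y p s, H x y p s =
      (∑ a, ∑ μ, Y x y p s a μ * p a μ) - L x y (Y x y p s) s)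
    (x : XT) (y : YT) (p : VT) (s : ST) (a : Fin n) (μ : Fin m) :
    fderiv ℝ (fun p' => H x y p' s) p (Pi.single a (Pi.single μ 1)) = Y x y p s a μ := by
  have h2 : fderiv ℝ (fun q : QT => H q.1 q.2.1 q.2.2.1 q.2.2.2) (x, y, p, s)
      ((0 : XT), (0 : YT), (Pi.single a (Pi.single μ 1) : VT), (0 : ST)) = Y x y p s a μ := by
    rw [master L hL Y hY hYright H hH]
    have hz : (((0 : XT), (0 : YT), (0 : VT), (0 : ST)) : QT) = 0 := rfl
    simp [sum_mul_single, hz]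
  exact (slice_v (F := fun q : QT => H q.1 q.2.1 q.2.2.1 q.2.2.2)
    (hHdiff L hL Y hY H hH (x, y, p, s)) (Pi.single a (Pi.single μ 1))).trans h2

lemma cor_y
    (L : XT → YT → VT → ST → ℝ)
    (hL : ContDiff ℝ (⊤ : ℕ∞) fun q : QT => L q.1 q.2.1 q.2.2.1 q.2.2.2)
    (Y : XT → YT → VT → ST → VT)
    (hY : ContDiff ℝ (⊤ : ℕ∞) fun q : QT => Y q.1 q.2.1 q.2.2.1 q.2.2.2)
    (hYright : ∀ x y p s a μ,
      fderiv ℝ (fun v' => L x y v' s) (Y x y p s) (Pi.single a (Pi.single μ 1)) = p a μ)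
    (H : XT → YT → VT → ST → ℝ)
    (hH : ∀ x y p s, H x y p s =
      (∑ a, ∑ μ, Y x y p s a μ * p a μ) - L x y (Y x y p s) s)
    (x : XT) (y : YT) (p : VT) (s : ST) (w : YT) :
    fderiv ℝ (fun y' => H x y' p s) y w
      = - fderiv ℝ (fun y' => L x y' (Y x y p s) s) y w := by
  have h2 : fderiv ℝ (fun q : QT => H q.1 q.2.1 q.2.2.1 q.2.2.2) (x, y, p, s)
      ((0 : XT), w, (0 : VT), (0 : ST))
      = - fderiv ℝ (fun y' => L x y' (Y x y p s) s) y w := by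
    rw [master L hL Y hY hYright H hH]
    rw [slice_y (F := fun q : QT => L q.1 q.2.1 q.2.2.1 q.2.2.2)
      (hL.differentiable (by simp) _) w]
    simp
  exact (slice_y (F := fun q : QT => H q.1 q.2.1 q.2.2.1 q.2.2.2)
    (hHdiff L hL Y hY H hH (x, y, p, s)) w).trans h2

lemma cor_s
    (L : XT → YT → VT → ST → ℝ)
    (hL : ContDiff ℝ (⊤ : ℕ∞) fun q : QT => L q.1 q.2.1 q.2.2.1 q.2.2.2)
    (Y : XT → YT → VT → ST → VT)
    (hY : ContDiff ℝ (⊤ : ℕ∞) fun q : QT => Y q.1 q.2.1 q.2.2.1 q.2.2.2)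
    (hYright : ∀ x y p s a μ,
      fderiv ℝ (fun v' => L x y v' s) (Y x y p s) (Pi.single a (Pi.single μ 1)) = p a μ)
    (H : XT → YT → VT → ST → ℝ)
    (hH : ∀ x y p s, H x y p s =
      (∑ a, ∑ μ, Y x y p s a μ * p a μ) - L x y (Y x y p s) s)
    (x : XT) (y : YT) (p : VT) (s : ST) (w : ST) :
    fderiv ℝ (fun s' => H x y p s') s w
      = - fderiv ℝ (fun s' => L x y (Y x y p s) s') s w := by
  have h2 : fderiv ℝ (fun q : QT => H q.1 q.2.1 q.2.2.1 q.2.2.2) (x, y, p, s)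
      ((0 : XT), (0 : YT), (0 : VT), w)
      = - fderiv ℝ (fun s' => L x y (Y x y p s) s') s w := by
    rw [master L hL Y hY hYright H hH]
    rw [slice_s (F := fun q : QT => L q.1 q.2.1 q.2.2.1 q.2.2.2)
      (hL.differentiable (by simp) _) w]
    simp
  exact (slice_s (F := fun q : QT => H q.1 q.2.1 q.2.2.1 q.2.2.2)
    (hHdiff L hL Y hY H hH (x, y, p, s)) w).trans h2

end Stmt4Aux


/-- Under the regular Legendre transform `H = y^a_μ p^μ_a − L`
(with smooth fiberwise inverse `Y` of the Legendre map), smooth fields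
`(y^a(x), s^μ(x))` solve the Herglotz–Euler–Lagrange equations
`∂/∂x^μ(∂L/∂y^a_μ) = ∂L/∂y^a + (∂L/∂s^μ)(∂L/∂y^a_μ)`, `∂s^μ/∂x^μ = L`
if and only if, with `p^μ_a(x) = (∂L/∂y^a_μ)(x, y(x), ∂y(x), s(x))`, the triple
`(y, p, s)` solves the Herglotz–Hamilton–de Donder–Weyl equations
`∂y^a/∂x^μ = ∂H/∂p^μ_a`, `∂p^μ_a/∂x^μ = −∂H/∂y^a − p^μ_a ∂H/∂s^μ`,
`∂s^μ/∂x^μ = p^μ_a ∂H/∂p^μ_a − H`. -/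
theorem stmt_4 (m n : ℕ)
    (L : (Fin m → ℝ) → (Fin n → ℝ) → (Fin n → Fin m → ℝ) → (Fin m → ℝ) → ℝ)
    (hL : ContDiff ℝ (⊤ : ℕ∞) fun q : (Fin m → ℝ) × (Fin n → ℝ) × (Fin n → Fin m → ℝ) ×
        (Fin m → ℝ) => L q.1 q.2.1 q.2.2.1 q.2.2.2)
    (Y : (Fin m → ℝ) → (Fin n → ℝ) → (Fin n → Fin m → ℝ) → (Fin m → ℝ) →
      Fin n → Fin m → ℝ)
    (hY : ContDiff ℝ (⊤ : ℕ∞) fun q : (Fin m → ℝ) × (Fin n → ℝ) × (Fin n → Fin m → ℝ) ×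
        (Fin m → ℝ) => Y q.1 q.2.1 q.2.2.1 q.2.2.2)
    (hYleft : ∀ x y v s, Y x y
        (fun a μ => fderiv ℝ (fun v' => L x y v' s) v (Pi.single a (Pi.single μ 1))) s = v)
    (hYright : ∀ x y p s a μ,
      fderiv ℝ (fun v' => L x y v' s) (Y x y p s) (Pi.single a (Pi.single μ 1)) = p a μ)
    (H : (Fin m → ℝ) → (Fin n → ℝ) → (Fin n → Fin m → ℝ) → (Fin m → ℝ) → ℝ)
    (hH : ∀ x y p s, H x y p s =
      (∑ a, ∑ μ, Y x y p s a μ * p a μ) - L x y (Y x y p s) s)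
    (ys : (Fin m → ℝ) → Fin n → ℝ) (hys : ContDiff ℝ (⊤ : ℕ∞) ys)
    (ss : (Fin m → ℝ) → Fin m → ℝ) (hss : ContDiff ℝ (⊤ : ℕ∞) ss)
    (p : (Fin m → ℝ) → Fin n → Fin m → ℝ)
    (hp : ∀ x a μ, p x a μ = fderiv ℝ (fun v' => L x (ys x) v' (ss x))
        (fun c ρ => fderiv ℝ (fun x' => ys x' c) x (Pi.single ρ 1))
        (Pi.single a (Pi.single μ 1))) :
    ((∀ x a, (∑ μ, fderiv ℝ (fun x' => p x' a μ) x (Pi.single μ 1))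
        = fderiv ℝ (fun y' => L x y'
              (fun c ρ => fderiv ℝ (fun x' => ys x' c) x (Pi.single ρ 1)) (ss x))
            (ys x) (Pi.single a 1)
          + ∑ μ, fderiv ℝ (fun s' => L x (ys x)
              (fun c ρ => fderiv ℝ (fun x' => ys x' c) x (Pi.single ρ 1)) s')
              (ss x) (Pi.single μ 1) * p x a μ)
      ∧ (∀ x, (∑ μ, fderiv ℝ (fun x' => ss x' μ) x (Pi.single μ 1))
          = L x (ys x) (fun c ρ => fderiv ℝ (fun x' => ys x' c) x (Pi.single ρ 1)) (ss x)))
    ↔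
    ((∀ x a μ, fderiv ℝ (fun x' => ys x' a) x (Pi.single μ 1)
        = fderiv ℝ (fun p' => H x (ys x) p' (ss x)) (p x) (Pi.single a (Pi.single μ 1)))
      ∧ (∀ x a, (∑ μ, fderiv ℝ (fun x' => p x' a μ) x (Pi.single μ 1))
        = - fderiv ℝ (fun y' => H x y' (p x) (ss x)) (ys x) (Pi.single a 1)
          - ∑ μ, p x a μ *
              fderiv ℝ (fun s' => H x (ys x) (p x) s') (ss x) (Pi.single μ 1))
      ∧ (∀ x, (∑ μ, fderiv ℝ (fun x' => ss x' μ) x (Pi.single μ 1))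
        = (∑ a, ∑ μ, p x a μ *
            fderiv ℝ (fun p' => H x (ys x) p' (ss x)) (p x) (Pi.single a (Pi.single μ 1)))
          - H x (ys x) (p x) (ss x))) := by
  have hYv : ∀ x, Y x (ys x) (p x) (ss x)
      = fun c ρ => fderiv ℝ (fun x' => ys x' c) x (Pi.single ρ 1) := by
    intro x
    have hpx : p x = fun a μ => fderiv ℝ (fun v' => L x (ys x) v' (ss x))
        (fun c ρ => fderiv ℝ (fun x' => ys x' c) x (Pi.single ρ 1))
        (Pi.single a (Pi.single μ 1)) := by
      funext a μ; exact hp x a μ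
    rw [hpx]
    exact hYleft x (ys x) _ (ss x)
  have key1 : ∀ x a μ, fderiv ℝ (fun p' => H x (ys x) p' (ss x)) (p x)
      (Pi.single a (Pi.single μ 1)) = fderiv ℝ (fun x' => ys x' a) x (Pi.single μ 1) := by
    intro x a μ
    rw [Stmt4Aux.cor_p L hL Y hY hYright H hH, hYv x]
  have key2 : ∀ x a,
      (- fderiv ℝ (fun y' => H x y' (p x) (ss x)) (ys x) (Pi.single a 1)
        - ∑ μ, p x a μ * fderiv ℝ (fun s' => H x (ys x) (p x) s') (ss x) (Pi.single μ 1))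
      = fderiv ℝ (fun y' => L x y'
            (fun c ρ => fderiv ℝ (fun x' => ys x' c) x (Pi.single ρ 1)) (ss x))
          (ys x) (Pi.single a 1)
        + ∑ μ, fderiv ℝ (fun s' => L x (ys x)
            (fun c ρ => fderiv ℝ (fun x' => ys x' c) x (Pi.single ρ 1)) s')
            (ss x) (Pi.single μ 1) * p x a μ := by
    intro x a
    rw [Stmt4Aux.cor_y L hL Y hY hYright H hH x (ys x) (p x) (ss x) (Pi.single a 1)]
    simp only [Stmt4Aux.cor_s L hL Y hY hYright H hH x (ys x) (p x) (ss x)]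
    simp only [hYv x]
    simp only [neg_neg, mul_neg, Finset.sum_neg_distrib, sub_neg_eq_add]
    congr 1
    exact Finset.sum_congr rfl fun μ _ => mul_comm _ _
  have key3 : ∀ x,
      ((∑ a, ∑ μ, p x a μ * fderiv ℝ (fun p' => H x (ys x) p' (ss x)) (p x)
          (Pi.single a (Pi.single μ 1))) - H x (ys x) (p x) (ss x))
      = L x (ys x) (fun c ρ => fderiv ℝ (fun x' => ys x' c) x (Pi.single ρ 1)) (ss x) := by
    intro x
    simp only [Stmt4Aux.cor_p L hL Y hY hYright H hH, hH x (ys x) (p x) (ss x), hYv x]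
    have hc : (∑ a, ∑ μ, p x a μ *
          (fun c ρ => fderiv ℝ (fun x' => ys x' c) x (Pi.single ρ 1)) a μ)
        = ∑ a, ∑ μ, (fun c ρ => fderiv ℝ (fun x' => ys x' c) x (Pi.single ρ 1)) a μ
            * p x a μ :=
      Finset.sum_congr rfl fun a _ => Finset.sum_congr rfl fun μ _ => mul_comm _ _
    rw [hc]
    ring
  constructor
  · rintro ⟨h1, h2⟩
    exact ⟨fun x a μ => (key1 x a μ).symm,
      fun x a => by rw [key2]; exact h1 x a,
      fun x => by rw [key3]; exact h2 x⟩
  · rintro ⟨g1, g2, g3⟩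
    exact ⟨fun x a => by rw [← key2]; exact g2 x a,
      fun x => by rw [← key3]; exact g3 x⟩
end

section
/- For the Lagrangian L = (1/2)ρ y_t² − (1/2)τ y_x² + a s^t − b(ρ/τ) s^x + ρ y f(t,x) with constants ρ, τ > 0 and a, b ∈ ℝ, the Herglotz–Euler–Lagrange field equation for y is the forced damped wave equation ∂²y/∂t² − (τ/ρ) ∂²y/∂x² = a ∂y/∂t + b ∂y/∂x + f(t,x). -/
/-- Partial derivative in the first variable of a function of two real variables. -/
noncomputable def pdt (F : ℝ → ℝ → ℝ) (t x : ℝ) : ℝ := deriv (fun t' => F t' x) t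

/-- Partial derivative in the second variable of a function of two real variables. -/
noncomputable def pdx (F : ℝ → ℝ → ℝ) (t x : ℝ) : ℝ := deriv (fun x' => F t x') x

lemma pdt_eq_fderiv (F : ℝ → ℝ → ℝ) (hF : ContDiff ℝ (⊤ : ℕ∞) fun p : ℝ × ℝ => F p.1 p.2)
    (t x : ℝ) : pdt F t x = fderiv ℝ (fun p : ℝ × ℝ => F p.1 p.2) (t, x) (1, 0) := by
  have h : HasDerivAt (fun t' => F t' x)
      (fderiv ℝ (fun p : ℝ × ℝ => F p.1 p.2) (t, x) ((1:ℝ), (0:ℝ))) t :=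
    by have hd := (hF.differentiable (by simp) (t, x)).hasFDerivAt
       exact hd.comp_hasDerivAt t
        ((hasDerivAt_id t).prodMk (hasDerivAt_const t x))
  exact h.deriv

lemma pdx_eq_fderiv (F : ℝ → ℝ → ℝ) (hF : ContDiff ℝ (⊤ : ℕ∞) fun p : ℝ × ℝ => F p.1 p.2)
    (t x : ℝ) : pdx F t x = fderiv ℝ (fun p : ℝ × ℝ => F p.1 p.2) (t, x) (0, 1) := by
  have h : HasDerivAt (fun x' => F t x')
      (fderiv ℝ (fun p : ℝ × ℝ => F p.1 p.2) (t, x) ((0:ℝ), (1:ℝ))) x :=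
    (hF.differentiable (by simp) (t, x)).hasFDerivAt.comp_hasDerivAt x
      ((hasDerivAt_const x t).prodMk (hasDerivAt_id x))
  exact h.deriv

lemma pdt_smooth (F : ℝ → ℝ → ℝ) (hF : ContDiff ℝ (⊤ : ℕ∞) fun p : ℝ × ℝ => F p.1 p.2) :
    ContDiff ℝ (⊤ : ℕ∞) fun p : ℝ × ℝ => pdt F p.1 p.2 := by
  have h : ContDiff ℝ (⊤ : ℕ∞) (fun p : ℝ × ℝ => fderiv ℝ (fun q : ℝ × ℝ => F q.1 q.2) p ((1:ℝ),(0:ℝ))) :=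
    (hF.fderiv_right (by simp)).clm_apply contDiff_const
  have e : (fun p : ℝ × ℝ => pdt F p.1 p.2)
      = fun p : ℝ × ℝ => fderiv ℝ (fun q : ℝ × ℝ => F q.1 q.2) p ((1:ℝ),(0:ℝ)) :=
    funext fun p => pdt_eq_fderiv F hF p.1 p.2
  rw [e]; exact h

lemma pdx_smooth (F : ℝ → ℝ → ℝ) (hF : ContDiff ℝ (⊤ : ℕ∞) fun p : ℝ × ℝ => F p.1 p.2) :
    ContDiff ℝ (⊤ : ℕ∞) fun p : ℝ × ℝ => pdx F p.1 p.2 := by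
  have h : ContDiff ℝ (⊤ : ℕ∞) (fun p : ℝ × ℝ => fderiv ℝ (fun q : ℝ × ℝ => F q.1 q.2) p ((0:ℝ),(1:ℝ))) :=
    (hF.fderiv_right (by simp)).clm_apply contDiff_const
  have e : (fun p : ℝ × ℝ => pdx F p.1 p.2)
      = fun p : ℝ × ℝ => fderiv ℝ (fun q : ℝ × ℝ => F q.1 q.2) p ((0:ℝ),(1:ℝ)) :=
    funext fun p => pdx_eq_fderiv F hF p.1 p.2
  rw [e]; exact h

lemma dslot1 (ρ τ a b A B C D E w : ℝ) :
    deriv (fun z => (1/2)*ρ*z^2 - (1/2)*τ*A^2 + a*B - b*(ρ/τ)*C + ρ*D*E) w = ρ*w := by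
  have h : HasDerivAt (fun z : ℝ => (1/2)*ρ*z^2 - (1/2)*τ*A^2 + a*B - b*(ρ/τ)*C + ρ*D*E)
      (ρ*w) w := by
    have h0 := ((((hasDerivAt_pow 2 w).const_mul ((1/2)*ρ)).sub_const
      ((1/2)*τ*A^2)).add_const (a*B)).sub_const (b*(ρ/τ)*C) |>.add_const (ρ*D*E)
    exact h0.congr_deriv (by push_cast; ring)
  exact h.deriv

lemma dslot2 (ρ τ a b A B C D E w : ℝ) :
    deriv (fun z => (1/2)*ρ*A^2 - (1/2)*τ*z^2 + a*B - b*(ρ/τ)*C + ρ*D*E) w = (-τ)*w := by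
  have h : HasDerivAt (fun z : ℝ => (1/2)*ρ*A^2 - (1/2)*τ*z^2 + a*B - b*(ρ/τ)*C + ρ*D*E)
      ((-τ)*w) w := by
    have h0 := ((((hasDerivAt_pow 2 w).const_mul ((1/2)*τ)).const_sub
      ((1/2)*ρ*A^2)).add_const (a*B)).sub_const (b*(ρ/τ)*C) |>.add_const (ρ*D*E)
    exact h0.congr_deriv (by push_cast; ring)
  exact h.deriv

lemma dslot3 (ρ τ a b A B C D E w : ℝ) :
    deriv (fun z => (1/2)*ρ*A^2 - (1/2)*τ*B^2 + a*C - b*(ρ/τ)*D + ρ*z*E) w = ρ*E := by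
  have h : HasDerivAt (fun z : ℝ => (1/2)*ρ*A^2 - (1/2)*τ*B^2 + a*C - b*(ρ/τ)*D + ρ*z*E)
      (ρ*E) w := by
    have h0 := (((hasDerivAt_id w).const_mul ρ).mul_const E).const_add
      ((1/2)*ρ*A^2 - (1/2)*τ*B^2 + a*C - b*(ρ/τ)*D)
    exact h0.congr_deriv (by ring)
  exact h.deriv

lemma dslot4 (ρ τ a b A B C D E w : ℝ) :
    deriv (fun z => (1/2)*ρ*A^2 - (1/2)*τ*B^2 + a*z - b*(ρ/τ)*C + ρ*D*E) w = a := by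
  have h : HasDerivAt (fun z : ℝ => (1/2)*ρ*A^2 - (1/2)*τ*B^2 + a*z - b*(ρ/τ)*C + ρ*D*E)
      a w := by
    have h0 := ((((hasDerivAt_id w).const_mul a).const_add
      ((1/2)*ρ*A^2 - (1/2)*τ*B^2)).sub_const (b*(ρ/τ)*C)).add_const (ρ*D*E)
    exact h0.congr_deriv (by ring)
  exact h.deriv

lemma dslot5 (ρ τ a b A B C D E w : ℝ) :
    deriv (fun z => (1/2)*ρ*A^2 - (1/2)*τ*B^2 + a*C - b*(ρ/τ)*z + ρ*D*E) w = -(b*(ρ/τ)) := by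
  have h : HasDerivAt (fun z : ℝ => (1/2)*ρ*A^2 - (1/2)*τ*B^2 + a*C - b*(ρ/τ)*z + ρ*D*E)
      (-(b*(ρ/τ))) w := by
    have h0 := (((hasDerivAt_id w).const_mul (b*(ρ/τ))).const_sub
      ((1/2)*ρ*A^2 - (1/2)*τ*B^2 + a*C)).add_const (ρ*D*E)
    exact h0.congr_deriv (by ring)
  exact h.deriv

/-- For `L = (1/2)ρ y_t² − (1/2)τ y_x² + a s^t − b(ρ/τ) s^x + ρ y f(t,x)`
with `ρ, τ > 0`, the Herglotz–Euler–Lagrange equation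
`d/dt(∂L/∂y_t) + d/dx(∂L/∂y_x) = ∂L/∂y + (∂L/∂s^t)(∂L/∂y_t) + (∂L/∂s^x)(∂L/∂y_x)`
along a holonomic section is equivalent to the forced damped wave equation
`∂²y/∂t² − (τ/ρ) ∂²y/∂x² = a ∂y/∂t + b ∂y/∂x + f(t,x)`. -/
theorem stmt_5 (ρ τ : ℝ) (hρ : 0 < ρ) (hτ : 0 < τ) (a b : ℝ)
    (f : ℝ → ℝ → ℝ) (hf : ContDiff ℝ (⊤ : ℕ∞) fun p : ℝ × ℝ => f p.1 p.2)
    (L : ℝ → ℝ → ℝ → ℝ → ℝ → ℝ → ℝ → ℝ)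
    (hL : ∀ t x y yt yx st sx, L t x y yt yx st sx =
      (1/2) * ρ * yt ^ 2 - (1/2) * τ * yx ^ 2 + a * st - b * (ρ/τ) * sx + ρ * y * f t x)
    (y st sx : ℝ → ℝ → ℝ)
    (hy : ContDiff ℝ (⊤ : ℕ∞) fun p : ℝ × ℝ => y p.1 p.2)
    (hst : ContDiff ℝ (⊤ : ℕ∞) fun p : ℝ × ℝ => st p.1 p.2)
    (hsx : ContDiff ℝ (⊤ : ℕ∞) fun p : ℝ × ℝ => sx p.1 p.2) :
    (∀ t x,
      pdt (fun t' x' => deriv (fun w =>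
          L t' x' (y t' x') w (pdx y t' x') (st t' x') (sx t' x')) (pdt y t' x')) t x
      + pdx (fun t' x' => deriv (fun w =>
          L t' x' (y t' x') (pdt y t' x') w (st t' x') (sx t' x')) (pdx y t' x')) t x
      = deriv (fun w =>
          L t x w (pdt y t x) (pdx y t x) (st t x) (sx t x)) (y t x)
        + deriv (fun w =>
            L t x (y t x) (pdt y t x) (pdx y t x) w (sx t x)) (st t x)
          * deriv (fun w =>
              L t x (y t x) w (pdx y t x) (st t x) (sx t x)) (pdt y t x)
        + deriv (fun w =>
            L t x (y t x) (pdt y t x) (pdx y t x) (st t x) w) (sx t x)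
          * deriv (fun w =>
              L t x (y t x) (pdt y t x) w (st t x) (sx t x)) (pdx y t x))
    ↔
    (∀ t x, pdt (fun t' x' => pdt y t' x') t x - (τ/ρ) * pdx (fun t' x' => pdx y t' x') t x
      = a * pdt y t x + b * pdx y t x + f t x) := by
  have hρ' := hρ.ne'
  have hτ' := hτ.ne'
  simp only [hL, dslot1, dslot2, dslot3, dslot4, dslot5]
  have hdyt : ∀ x, Differentiable ℝ (fun t' => pdt y t' x) := fun x =>
    ((pdt_smooth y hy).differentiable (by simp)).comp (differentiable_id.prodMk (differentiable_const x))
  have hdyx : ∀ t, Differentiable ℝ (fun x' => pdx y t x') := fun t =>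
    ((pdx_smooth y hy).differentiable (by simp)).comp ((differentiable_const t).prodMk differentiable_id)
  have e1 : ∀ t x, pdt (fun t' x' => ρ * pdt y t' x') t x
      = ρ * pdt (fun t' x' => pdt y t' x') t x := by
    intro t x
    exact deriv_const_mul ρ ((hdyt x) t)
  have e2 : ∀ t x, pdx (fun t' x' => (-τ) * pdx y t' x') t x
      = (-τ) * pdx (fun t' x' => pdx y t' x') t x := by
    intro t x
    exact deriv_const_mul (-τ) ((hdyx t) x)
  simp only [e1, e2]
  constructor
  · intro h t x
    have h1 := h t x
    field_simp at h1 ⊢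
    nlinarith [h1]
  · intro h t x
    have h1 := h t x
    field_simp at h1 ⊢
    nlinarith [h1]
end

section
/- Let u : ℝ² → ℝ be C². For any constant k > 0, u solves Burgers' equation ∂u/∂t + u ∂u/∂x = k ∂²u/∂x² if and only if the tuple (u, v, s^t, s^x, q^x, p^x) with v = 0, s^x = 0, p^x = 0, q^x = −k ∂u/∂x, and s^t defined by ∂s^t/∂t = L along the section, solves the Herglotz–Euler–Lagrange equations of the Lagrangian L = −k u_x v_x − (1/2)(v u_t − u v_t) − γ u s^x with γ = −1/k. -/
/-- For `k > 0`, a C² function `u` solves Burgers' equation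
`∂u/∂t + u ∂u/∂x = k ∂²u/∂x²` if and only if the tuple
`(u, v, s^t, s^x, q^x, p^x)` with `v = 0`, `s^x = 0`, `p^x = 0`,
`q^x = −k ∂u/∂x`, and `s^t` defined by `∂s^t/∂t = L` along the section, solves
the Herglotz–Euler–Lagrange equations of
`L = −k u_x v_x − (1/2)(v u_t − u v_t) − γ u s^x` with `γ = −1/k`, namely
`∂u/∂t − kγ u ∂u/∂x = k ∂²u/∂x²`,
`∂v/∂t + kγ u ∂v/∂x = −k ∂²v/∂x² + γ s^x`, and
`∂s^t/∂t + ∂s^x/∂x = L`. -/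
theorem stmt_8 (k : ℝ) (hk : 0 < k) (u : ℝ → ℝ → ℝ)
    (hu : ContDiff ℝ 2 fun p : ℝ × ℝ => u p.1 p.2)
    (γ : ℝ) (hγ : γ = -1/k)
    (v sx px qx : ℝ → ℝ → ℝ)
    (hv : v = fun _ _ => 0) (hsx : sx = fun _ _ => 0) (hpx : px = fun _ _ => 0)
    (hqx : qx = fun t x => -k * pdx u t x)
    (st : ℝ → ℝ → ℝ)
    (hst : ∀ t x, pdt st t x =
      -k * pdx u t x * pdx v t x
        - (1/2) * (v t x * pdt u t x - u t x * pdt v t x)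
        - γ * u t x * sx t x) :
    (∀ t x, pdt u t x + u t x * pdx u t x = k * pdx (fun t' x' => pdx u t' x') t x)
    ↔
    ((∀ t x, pdt u t x - k * γ * u t x * pdx u t x
        = k * pdx (fun t' x' => pdx u t' x') t x)
      ∧ (∀ t x, pdt v t x + k * γ * u t x * pdx v t x
        = -k * pdx (fun t' x' => pdx v t' x') t x + γ * sx t x)
      ∧ (∀ t x, pdt st t x + pdx sx t x =
          -k * pdx u t x * pdx v t x
            - (1/2) * (v t x * pdt u t x - u t x * pdt v t x)
            - γ * u t x * sx t x)) := by
  have hkγ : k * γ = -1 := by rw [hγ]; field_simp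
  have hv0 : ∀ t x, pdt v t x = 0 := by intro t x; simp [pdt, hv]
  have hvx : ∀ t x, pdx v t x = 0 := by intro t x; simp [pdx, hv]
  have hsx0 : ∀ t x, pdx sx t x = 0 := by intro t x; simp [pdx, hsx]
  constructor
  · intro h
    refine ⟨fun t x => ?_, fun t x => ?_, fun t x => ?_⟩
    · have := h t x
      linear_combination this - u t x * pdx u t x * hkγ
    · simp [pdt, pdx, hv, hsx]
    · rw [hst t x, hsx0]; ring
  · rintro ⟨h1, -, -⟩ t x
    have := h1 t x
    linear_combination this + u t x * pdx u t x * hkγ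
end
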